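/- arXiv:2302.12997 — 2 statements merged into one kernel-verified Lean document; each statement's English description precedes it below -/
import Mathlib

section
/- Let n = ∑_{i=1}^{s} ∑_{k=l_i}^{t_i} 2^k with t_1 ≥ l_1 > l_1-2 ≥ t_2 ≥ l_2 > ... ≥ t_s ≥ l_s ≥ 0. Then there is an absolute constant c such that pointwise on G: |n K_n| ≤ c ∑_{A=1}^{s} ( 2^{l_A} |K_{2^{l_A}}| + 2^{t_A} |K_{2^{t_A}}| + 2^{l_A} ∑_{k=l_A}^{t_A} D_{2^k} ). -/
open MeasureTheory Finset

noncomputable section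

/-- The dyadic group: countable product of `ZMod 2`. -/
abbrev G := ℕ → ZMod 2

instance : MeasurableSpace (ZMod 2) := ⊤

/-- Walsh–Paley function `w n`. -/
def walsh (n : ℕ) (x : G) : ℝ :=
  ∏ k ∈ Finset.range (n + 1), if n.testBit k then (-1 : ℝ) ^ (x k).val else 1

/-- Walsh–Dirichlet kernel `D n = ∑_{k<n} w k`. -/
def Dker (n : ℕ) (x : G) : ℝ := ∑ k ∈ Finset.range n, walsh k x

/-- Walsh–Fejér kernel `K n = (1/n) ∑_{k=1}^n D k`. -/
def Kker (n : ℕ) (x : G) : ℝ := (1 / (n : ℝ)) * ∑ k ∈ Finset.range n, Dker (k + 1) x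

/-- Dyadic cylinder `I_n(y)`: points agreeing with `y` in the first `n` coordinates. -/
def cyl (n : ℕ) (y : G) : Set G := {x | ∀ j < n, x j = y j}

/-- `I_n = I_n(0)`. -/
def Iset (n : ℕ) : Set G := cyl n 0

/-- The generator `e t`, with a single `1` in coordinate `t`. -/
def e (t : ℕ) : G := fun j => if j = t then 1 else 0

lemma walsh_extend (n m : ℕ) (h : n + 1 ≤ m) (x : G) :
    walsh n x = ∏ k ∈ Finset.range m, if n.testBit k then (-1 : ℝ) ^ (x k).val else 1 := by
  unfold walsh
  refine Finset.prod_subset (Finset.range_subset_range.mpr h) ?_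
  intro k _ hk
  simp only [Finset.mem_range, not_lt] at hk
  have : n.testBit k = false :=
    Nat.testBit_lt_two_pow (lt_of_lt_of_le (n.lt_two_pow_self) (Nat.pow_le_pow_right (by norm_num) (le_trans (Nat.le_succ n) hk)))
  simp [this]

lemma abs_walsh (n : ℕ) (x : G) : |walsh n x| = 1 := by
  unfold walsh
  rw [Finset.abs_prod]
  apply Finset.prod_eq_one
  intro k _
  by_cases h : n.testBit k <;> simp [h, abs_pow]

lemma testBit_split {v a b : ℕ} (ha : 2 ^ v ∣ a) (hb : b < 2 ^ v) (j : ℕ) :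
    (a + b).testBit j = (a.testBit j || b.testBit j) := by
  obtain ⟨q, rfl⟩ := ha
  rw [Nat.testBit_two_pow_mul_add q hb j, Nat.testBit_two_pow_mul]
  by_cases h : j < v
  · simp [h, Nat.not_le.mpr h]
  · simp [h, Nat.not_lt.mp h, Nat.testBit_lt_two_pow (lt_of_lt_of_le hb (Nat.pow_le_pow_right (by norm_num) (Nat.not_lt.mp h)))]

lemma testBit_disj {v a b : ℕ} (ha : 2 ^ v ∣ a) (hb : b < 2 ^ v) (j : ℕ) :
    ¬(a.testBit j = true ∧ b.testBit j = true) := by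
  rintro ⟨h1, h2⟩
  obtain ⟨q, rfl⟩ := ha
  rw [Nat.testBit_two_pow_mul] at h1
  have hjv : v ≤ j := by
    rcases Nat.lt_or_ge j v with h | h
    · simp [Nat.not_le.mpr h] at h1
    · exact h
  have : b.testBit j = false :=
    Nat.testBit_lt_two_pow (lt_of_lt_of_le hb (Nat.pow_le_pow_right (by norm_num) hjv))
  simp [this] at h2

lemma walsh_add {v a b : ℕ} (ha : 2 ^ v ∣ a) (hb : b < 2 ^ v) (x : G) :
    walsh (a + b) x = walsh a x * walsh b x := by
  rw [walsh_extend (a+b) (a+b+1) le_rfl, walsh_extend a (a+b+1) (by omega),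
      walsh_extend b (a+b+1) (by omega), ← Finset.prod_mul_distrib]
  apply Finset.prod_congr rfl
  intro k _
  rw [testBit_split ha hb k]
  have := testBit_disj ha hb k
  by_cases h1 : a.testBit k <;> by_cases h2 : b.testBit k <;> simp_all

lemma Dker_add {v a b : ℕ} (ha : 2 ^ v ∣ a) (hb : b ≤ 2 ^ v) (x : G) :
    Dker (a + b) x = Dker a x + walsh a x * Dker b x := by
  unfold Dker
  rw [Finset.range_add, Finset.sum_union (by
    simp [Finset.disjoint_left]
    intro k hk; omega), Finset.sum_map, Finset.mul_sum]
  congr 1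
  apply Finset.sum_congr rfl
  intro i hi
  simp only [Finset.mem_range] at hi
  exact walsh_add ha (lt_of_lt_of_le hi hb) x

def Lf (n : ℕ) (x : G) : ℝ := ∑ k ∈ Finset.range n, Dker (k + 1) x

lemma Lf_eq (n : ℕ) (x : G) : (n : ℝ) * Kker n x = Lf n x := by
  rcases Nat.eq_zero_or_pos n with h | h
  · simp [h, Lf, Kker]
  · unfold Kker Lf
    rw [← mul_assoc, mul_one_div, div_self (by positivity), one_mul]

lemma Lf_add {v a b : ℕ} (ha : 2 ^ v ∣ a) (hb : b ≤ 2 ^ v) (x : G) :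
    Lf (a + b) x = Lf a x + (b : ℝ) * Dker a x + walsh a x * Lf b x := by
  unfold Lf
  rw [Finset.range_add, Finset.sum_union (by
    simp [Finset.disjoint_left]; intro k hk; omega), Finset.sum_map, Finset.mul_sum]
  rw [add_assoc]
  congr 1
  have : ∀ i ∈ Finset.range b, Dker (a + i + 1) x = Dker a x + walsh a x * Dker (i + 1) x := by
    intro i hi
    simp only [Finset.mem_range] at hi
    rw [add_assoc]
    exact Dker_add ha (by omega) x
  rw [Finset.sum_congr rfl (fun i hi => by simpa using this i hi), Finset.sum_add_distrib]
  simp [Finset.mul_sum]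

lemma walsh_two_pow (k : ℕ) (x : G) : walsh (2 ^ k) x = (-1 : ℝ) ^ (x k).val := by
  unfold walsh
  rw [Finset.prod_eq_single k]
  · simp [Nat.testBit_two_pow_self]
  · intro j _ hj
    simp [Nat.testBit_two_pow_of_ne (Ne.symm hj)]
  · intro h
    exact absurd (Finset.mem_range.mpr (by have := k.lt_two_pow_self; omega)) h

lemma Dker_two_pow_eq (k : ℕ) (x : G) :
    Dker (2 ^ k) x = ∏ i ∈ Finset.range k, (1 + (-1 : ℝ) ^ (x i).val) := by
  induction k with
  | zero =>
    simp [Dker, walsh]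
  | succ k ih =>
    have : (2 : ℕ) ^ (k + 1) = 2 ^ k + 2 ^ k := by ring
    rw [this, Dker_add dvd_rfl le_rfl x, ih, walsh_two_pow, Finset.prod_range_succ]
    ring

lemma Dker_two_pow_nonneg (k : ℕ) (x : G) : 0 ≤ Dker (2 ^ k) x := by
  rw [Dker_two_pow_eq]
  apply Finset.prod_nonneg
  intro i _
  rcases Nat.even_or_odd (x i).val with h | h
  · rw [h.neg_one_pow]; norm_num
  · rw [h.neg_one_pow]; norm_num

lemma walsh_eq_one {k j : ℕ} (hj : j < 2 ^ k) {x : G} (hx : ∀ i < k, x i = 0) :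
    walsh j x = 1 := by
  unfold walsh
  apply Finset.prod_eq_one
  intro m _
  by_cases h : j.testBit m
  · have h1 : 2 ^ m ≤ j := Nat.ge_two_pow_of_testBit h
    have h2 : m < k := by
      by_contra hc
      exact absurd (lt_of_lt_of_le hj (Nat.pow_le_pow_right (by norm_num) (Nat.not_lt.mp hc))) (by omega)
    rw [hx m h2]
    simp [h]
  · simp [h]

lemma gauss (n : ℕ) : ∑ j ∈ Finset.range n, ((j : ℝ) + 1) = n * (n + 1) / 2 := by
  induction n with
  | zero => simp
  | succ n ih => rw [Finset.sum_range_succ, ih]; push_cast; ring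

lemma Dker_le_Kker (k : ℕ) (x : G) : Dker (2 ^ k) x ≤ 2 * |Kker (2 ^ k) x| := by
  by_cases hx : ∀ i < k, x i = 0
  · have hD : Dker (2 ^ k) x = 2 ^ k := by
      rw [Dker_two_pow_eq]
      have : ∀ i ∈ Finset.range k, (1 + (-1 : ℝ) ^ (x i).val) = 2 := by
        intro i hi
        rw [hx i (Finset.mem_range.mp hi)]
        norm_num
      rw [Finset.prod_congr rfl this]
      simp
    have hDj : ∀ j ∈ Finset.range (2 ^ k), Dker (j + 1) x = (j : ℝ) + 1 := by
      intro j hj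
      have hj' : j + 1 ≤ 2 ^ k := Finset.mem_range.mp hj
      unfold Dker
      rw [Finset.sum_congr rfl (fun i hi => walsh_eq_one
        (lt_of_lt_of_le (Finset.mem_range.mp hi) hj') hx)]
      simp
    have hK : Kker (2 ^ k) x = ((2 : ℝ) ^ k + 1) / 2 := by
      unfold Kker
      rw [Finset.sum_congr rfl hDj, gauss]
      have h2 : ((2 ^ k : ℕ) : ℝ) = (2 : ℝ) ^ k := by push_cast; ring
      rw [h2]
      have : (0:ℝ) < 2 ^ k := by positivity
      field_simp
    rw [hD, hK, abs_of_nonneg (by positivity)]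
    nlinarith [pow_pos (by norm_num : (0:ℝ) < 2) k]
  · push_neg at hx
    obtain ⟨i, hik, hi0⟩ := hx
    have hval : (x i).val = 1 := by
      have h1 : (x i).val < 2 := (x i).val_lt
      have h2 : (x i).val ≠ 0 := fun h => hi0 ((ZMod.val_eq_zero _).mp h)
      omega
    have hD : Dker (2 ^ k) x = 0 := by
      rw [Dker_two_pow_eq]
      apply Finset.prod_eq_zero (Finset.mem_range.mpr hik)
      rw [hval]
      norm_num
    rw [hD]
    positivity

/-- closed form for block sums -/
lemma block_sum_add {l t : ℕ} (h : l ≤ t) :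
    (∑ k ∈ Finset.Icc l t, 2 ^ k) + 2 ^ l = 2 ^ (t + 1) := by
  induction t, h using Nat.le_induction with
  | base => simp [pow_succ]; ring
  | succ t ht ih =>
    rw [Finset.sum_Icc_succ_top (by omega)]
    have : (2:ℕ) ^ (t + 1 + 1) = 2 ^ (t+1) + 2 ^ (t+1) := by ring
    omega

lemma block_dvd (l t : ℕ) : 2 ^ l ∣ ∑ k ∈ Finset.Icc l t, 2 ^ k := by
  apply Finset.dvd_sum
  intro k hk
  exact pow_dvd_pow 2 (Finset.mem_Icc.mp hk).1

lemma abs_Dker_block {l t : ℕ} (h : l ≤ t) (x : G) :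
    |Dker (∑ k ∈ Finset.Icc l t, 2 ^ k) x| ≤ ∑ k ∈ Finset.Icc l t, Dker (2 ^ k) x := by
  induction t, h using Nat.le_induction with
  | base =>
    simp only [Finset.Icc_self, Finset.sum_singleton]
    rw [abs_of_nonneg (Dker_two_pow_nonneg l x)]
  | succ t ht ih =>
    rw [Finset.sum_Icc_succ_top (by omega : l ≤ t + 1),
        Finset.sum_Icc_succ_top (by omega : l ≤ t + 1)]
    have hM : (∑ k ∈ Finset.Icc l t, 2 ^ k) ≤ 2 ^ (t + 1) := by
      have := block_sum_add ht
      have : (2:ℕ)^l ≥ 1 := Nat.one_le_two_pow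
      omega
    rw [add_comm (∑ k ∈ Finset.Icc l t, 2 ^ k) (2 ^ (t+1)),
        Dker_add (dvd_refl _) hM x]
    calc |Dker (2 ^ (t+1)) x + walsh (2 ^ (t+1)) x * Dker (∑ k ∈ Finset.Icc l t, 2 ^ k) x|
        ≤ |Dker (2 ^ (t+1)) x| + |walsh (2 ^ (t+1)) x| * |Dker (∑ k ∈ Finset.Icc l t, 2 ^ k) x| := by
          rw [← abs_mul]; exact abs_add_le _ _
      _ ≤ (∑ k ∈ Finset.Icc l t, Dker (2 ^ k) x) + Dker (2 ^ (t+1)) x := by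
          rw [abs_walsh, one_mul, abs_of_nonneg (Dker_two_pow_nonneg _ x)]
          linarith [ih]
      _ = _ := by ring

lemma abs_Lf_two_pow (j : ℕ) (x : G) : |Lf (2 ^ j) x| = (2:ℝ) ^ j * |Kker (2 ^ j) x| := by
  rw [← Lf_eq, abs_mul, Nat.abs_cast]
  push_cast
  ring

lemma abs_Lf_two_pow_succ (t : ℕ) (x : G) :
    |Lf (2 ^ (t + 1)) x| ≤ 4 * ((2:ℝ) ^ t * |Kker (2 ^ t) x|) := by
  have h : (2:ℕ) ^ (t+1) = 2 ^ t + 2 ^ t := by ring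
  rw [h, Lf_add (dvd_refl _) le_rfl x]
  have h1 := abs_Lf_two_pow t x
  have h2 := Dker_le_Kker t x
  have h3 := Dker_two_pow_nonneg t x
  have h4 := abs_walsh (2 ^ t) x
  have hc : ((2 ^ t : ℕ) : ℝ) = (2:ℝ) ^ t := by push_cast; ring
  calc |Lf (2 ^ t) x + ((2 ^ t : ℕ) : ℝ) * Dker (2 ^ t) x + walsh (2 ^ t) x * Lf (2 ^ t) x|
      ≤ |Lf (2 ^ t) x| + ((2 ^ t : ℕ) : ℝ) * Dker (2 ^ t) x
        + |walsh (2 ^ t) x| * |Lf (2 ^ t) x| := by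
        have := abs_add_le (Lf (2 ^ t) x + ((2 ^ t : ℕ) : ℝ) * Dker (2 ^ t) x)
          (walsh (2 ^ t) x * Lf (2 ^ t) x)
        have h5 : |Lf (2 ^ t) x + ((2 ^ t : ℕ) : ℝ) * Dker (2 ^ t) x|
            ≤ |Lf (2 ^ t) x| + ((2 ^ t : ℕ) : ℝ) * Dker (2 ^ t) x := by
          have := abs_add_le (Lf (2 ^ t) x) (((2 ^ t : ℕ) : ℝ) * Dker (2 ^ t) x)
          have : |((2 ^ t : ℕ) : ℝ) * Dker (2 ^ t) x| = ((2 ^ t : ℕ) : ℝ) * Dker (2 ^ t) x := by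
            rw [abs_of_nonneg]; positivity
          linarith [abs_add_le (Lf (2 ^ t) x) (((2 ^ t : ℕ) : ℝ) * Dker (2 ^ t) x)]
        rw [abs_mul] at this
        linarith
    _ ≤ 4 * ((2:ℝ) ^ t * |Kker (2 ^ t) x|) := by
        rw [h4, one_mul, h1, hc]
        nlinarith [pow_pos (by norm_num : (0:ℝ) < 2) t, abs_nonneg (Kker (2 ^ t) x)]

lemma block_bound {l t : ℕ} (h : l ≤ t) (x : G) :
    |Lf (∑ k ∈ Finset.Icc l t, 2 ^ k) x| ≤
      4 * ((2:ℝ) ^ t * |Kker (2 ^ t) x|) + (2:ℝ) ^ l * |Kker (2 ^ l) x|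
        + (2:ℝ) ^ l * ∑ k ∈ Finset.Icc l t, Dker (2 ^ k) x := by
  set M := ∑ k ∈ Finset.Icc l t, 2 ^ k with hMdef
  have hsplit : Lf (2 ^ (t + 1)) x = Lf M x + ((2 ^ l : ℕ) : ℝ) * Dker M x + walsh M x * Lf (2 ^ l) x := by
    rw [← block_sum_add h, Lf_add (block_dvd l t) le_rfl x]
  have hLfM : Lf M x = Lf (2 ^ (t+1)) x - ((2 ^ l : ℕ) : ℝ) * Dker M x - walsh M x * Lf (2 ^ l) x := by
    linarith
  have hc : ((2 ^ l : ℕ) : ℝ) = (2:ℝ) ^ l := by push_cast; ring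
  have hDM := abs_Dker_block h x
  have hS : 0 ≤ ∑ k ∈ Finset.Icc l t, Dker (2 ^ k) x :=
    Finset.sum_nonneg fun k _ => Dker_two_pow_nonneg k x
  calc |Lf M x| ≤ |Lf (2 ^ (t+1)) x| + ((2 ^ l : ℕ) : ℝ) * |Dker M x|
        + |walsh M x| * |Lf (2 ^ l) x| := by
        rw [hLfM]
        have h1 : |((2 ^ l : ℕ) : ℝ) * Dker M x| = ((2 ^ l : ℕ) : ℝ) * |Dker M x| := by
          rw [abs_mul, Nat.abs_cast]
        have h2 := abs_sub (Lf (2 ^ (t+1)) x - ((2 ^ l : ℕ) : ℝ) * Dker M x) (walsh M x * Lf (2 ^ l) x)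
        have h3 := abs_sub (Lf (2 ^ (t+1)) x) (((2 ^ l : ℕ) : ℝ) * Dker M x)
        rw [abs_mul] at h2
        linarith
    _ ≤ _ := by
        rw [abs_walsh, one_mul, abs_Lf_two_pow l x, hc]
        rw [← hMdef] at hDM
        have h6 := abs_Lf_two_pow_succ t x
        have h2 : (0:ℝ) < 2 ^ l := by positivity
        have h7 := mul_le_mul_of_nonneg_left hDM (le_of_lt h2)
        linarith

def Nsum (s : ℕ) (l t : ℕ → ℕ) : ℕ := ∑ i ∈ Finset.range s, ∑ k ∈ Finset.Icc (l i) (t i), 2 ^ k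

lemma Nsum_lt : ∀ (s : ℕ) (l t : ℕ → ℕ),
    (∀ i, i < s + 1 → l i ≤ t i) → (∀ i, i + 1 < s + 1 → t (i + 1) + 2 ≤ l i) →
    Nsum (s + 1) l t < 2 ^ (t 0 + 1) := by
  intro s
  induction s with
  | zero =>
    intro l t h1 _
    have hb := block_sum_add (h1 0 (by omega))
    have hpos : (0:ℕ) < 2 ^ l 0 := Nat.two_pow_pos _
    show Nsum 1 l t < 2 ^ (t 0 + 1)
    have hone : Nsum 1 l t = ∑ k ∈ Finset.Icc (l 0) (t 0), 2 ^ k := by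
      unfold Nsum; rw [Finset.sum_range_one]
    omega
  | succ s ih =>
    intro l t h1 h2
    have key : Nsum (s + 1 + 1) l t = Nsum (s + 1) (fun i => l (i + 1)) (fun i => t (i + 1))
        + ∑ k ∈ Finset.Icc (l 0) (t 0), 2 ^ k := by
      unfold Nsum
      rw [Finset.sum_range_succ']
    have hrest : Nsum (s + 1) (fun i => l (i + 1)) (fun i => t (i + 1)) < 2 ^ (t 1 + 1) := by
      simpa using ih (fun i => l (i + 1)) (fun i => t (i + 1))
        (fun i hi => h1 (i + 1) (by omega)) (fun i hi => h2 (i + 1) (by omega))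
    have ht1 : t 1 + 2 ≤ l 0 := h2 0 (by omega)
    have hle : 2 ^ (t 1 + 1) ≤ 2 ^ (l 0) := Nat.pow_le_pow_right (by norm_num) (by omega)
    have hb := block_sum_add (h1 0 (by omega))
    omega

theorem main_bound : ∀ (s : ℕ) (l t : ℕ → ℕ),
    (∀ i, i < s → l i ≤ t i) → (∀ i, i + 1 < s → t (i + 1) + 2 ≤ l i) → ∀ x : G,
    |Lf (Nsum s l t) x| ≤ 5 * ∑ i ∈ Finset.range s,
      ((2 : ℝ) ^ l i * |Kker (2 ^ l i) x| + (2 : ℝ) ^ t i * |Kker (2 ^ t i) x| +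
        (2 : ℝ) ^ l i * ∑ k ∈ Finset.Icc (l i) (t i), Dker (2 ^ k) x) := by
  intro s
  induction s with
  | zero => intro l t _ _ x; simp [Nsum, Lf]
  | succ s ih =>
    intro l t h1 h2 x
    set M := ∑ k ∈ Finset.Icc (l 0) (t 0), 2 ^ k with hM
    set r := Nsum s (fun i => l (i + 1)) (fun i => t (i + 1)) with hr
    have hsplit : Nsum (s + 1) l t = M + r := by
      unfold Nsum
      rw [Finset.sum_range_succ']
      rw [hM, hr]; unfold Nsum; ring
    have hl0t0 : l 0 ≤ t 0 := h1 0 (by omega)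
    have hrle : r ≤ 2 ^ l 0 := by
      cases s with
      | zero => simp [hr, Nsum]
      | succ s' =>
        have hlt : r < 2 ^ (t 1 + 1) := by
          rw [hr]
          simpa using Nsum_lt s' (fun i => l (i + 1)) (fun i => t (i + 1))
            (fun i hi => h1 (i + 1) (by omega)) (fun i hi => h2 (i + 1) (by omega))
        have ht1 : t 1 + 2 ≤ l 0 := h2 0 (by omega)
        have hle : 2 ^ (t 1 + 1) ≤ 2 ^ (l 0) := Nat.pow_le_pow_right (by norm_num) (by omega)
        omega
    have hLf : Lf (Nsum (s + 1) l t) x = Lf M x + (r : ℝ) * Dker M x + walsh M x * Lf r x := by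
      rw [hsplit]
      exact Lf_add (block_dvd (l 0) (t 0)) hrle x
    have hih := ih (fun i => l (i + 1)) (fun i => t (i + 1))
      (fun i hi => h1 (i + 1) (by omega)) (fun i hi => h2 (i + 1) (by omega)) x
    have hbb := block_bound hl0t0 x
    have hDM := abs_Dker_block hl0t0 x
    rw [← hM] at hDM hbb
    have hS : 0 ≤ ∑ k ∈ Finset.Icc (l 0) (t 0), Dker (2 ^ k) x :=
      Finset.sum_nonneg fun k _ => Dker_two_pow_nonneg k x
    have hrD : (r : ℝ) * Dker M x ≤ (2:ℝ) ^ l 0 * ∑ k ∈ Finset.Icc (l 0) (t 0), Dker (2 ^ k) x := by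
      have hrr : (r : ℝ) ≤ (2:ℝ) ^ l 0 := by
        have := (Nat.cast_le (α := ℝ)).mpr hrle
        push_cast at this
        linarith
      have h0r : (0:ℝ) ≤ (r : ℝ) := Nat.cast_nonneg r
      calc (r : ℝ) * Dker M x ≤ (r : ℝ) * |Dker M x| := by
            exact mul_le_mul_of_nonneg_left (le_abs_self _) h0r
        _ ≤ (2:ℝ) ^ l 0 * ∑ k ∈ Finset.Icc (l 0) (t 0), Dker (2 ^ k) x := by
            apply mul_le_mul hrr hDM (abs_nonneg _) (by positivity)
    -- peel RHS sum
    rw [Finset.sum_range_succ']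
    have habs : |Lf (Nsum (s + 1) l t) x| ≤ |Lf M x| + (r : ℝ) * |Dker M x| + |Lf r x| := by
      rw [hLf]
      have e1 := abs_add_le (Lf M x + (r : ℝ) * Dker M x) (walsh M x * Lf r x)
      have e2 := abs_add_le (Lf M x) ((r : ℝ) * Dker M x)
      rw [abs_mul, abs_walsh, one_mul] at e1
      rw [abs_mul, Nat.abs_cast] at e2
      linarith
    have hrD' : (r : ℝ) * |Dker M x| ≤ (2:ℝ) ^ l 0 * ∑ k ∈ Finset.Icc (l 0) (t 0), Dker (2 ^ k) x := by
      have hrr : (r : ℝ) ≤ (2:ℝ) ^ l 0 := by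
        have := (Nat.cast_le (α := ℝ)).mpr hrle
        push_cast at this
        linarith
      exact mul_le_mul hrr hDM (abs_nonneg _) (by positivity)
    have hK1 : (0:ℝ) ≤ (2:ℝ) ^ l 0 * |Kker (2 ^ l 0) x| := by positivity
    have hK2 : (0:ℝ) ≤ (2:ℝ) ^ t 0 * |Kker (2 ^ t 0) x| := by positivity
    have hS' : (0:ℝ) ≤ (2:ℝ) ^ l 0 * ∑ k ∈ Finset.Icc (l 0) (t 0), Dker (2 ^ k) x := by positivity
    linarith [hih, hbb, habs, hrD']


/-- pointwise upper bound for `|n K_n|` in terms of dyadic kernels. -/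
theorem fejer_upper_bound :
    ∃ c : ℝ, 0 < c ∧
      ∀ (s : ℕ) (l t : ℕ → ℕ),
        (∀ i, i < s → l i ≤ t i) →
        (∀ i, i + 1 < s → t (i + 1) + 2 ≤ l i) →
        ∀ (N : ℕ), N = ∑ i ∈ Finset.range s, ∑ k ∈ Finset.Icc (l i) (t i), 2 ^ k →
          ∀ x : G,
            |(N : ℝ) * Kker N x| ≤
              c * ∑ i ∈ Finset.range s,
                ((2 : ℝ) ^ l i * |Kker (2 ^ l i) x| + (2 : ℝ) ^ t i * |Kker (2 ^ t i) x| +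
                  (2 : ℝ) ^ l i * ∑ k ∈ Finset.Icc (l i) (t i), Dker (2 ^ k) x) := by
  refine ⟨5, by norm_num, ?_⟩
  intro s l t h1 h2 N hN x
  subst hN
  rw [Lf_eq]
  exact main_bound s l t h1 h2 x
end
end

section
/- Fix M ∈ ℕ and l with 0 ≤ l < M. Define II_l(x) := 2^M ∫_{I_M} 2^l ∑_{k=l}^{∞} D_{2^k}(x+t) dμ(t). Then ∫_{G \ I_M} |II_l(x)|^{1/2} dμ(x) ≤ C for an absolute constant C independent of M and l. (Note: for x ∉ I_M and t ∈ I_M, only finitely many terms D_{2^k}(x+t) are nonzero.) -/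
open MeasureTheory Finset

noncomputable section

lemma prod_bits (n A B : ℕ) (hAB : A ≤ B) (hA : n < 2 ^ A) (x : G) :
    ∏ k ∈ Finset.range B, (if n.testBit k then (-1 : ℝ) ^ (x k).val else 1)
      = ∏ k ∈ Finset.range A, (if n.testBit k then (-1 : ℝ) ^ (x k).val else 1) := by
  refine (Finset.prod_subset (Finset.range_subset_range.2 hAB) ?_).symm
  intro k _ hk
  simp only [Finset.mem_range, not_lt] at hk
  rw [Nat.testBit_lt_two_pow
    (lt_of_lt_of_le hA (Nat.pow_le_pow_right (by norm_num) hk))]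
  simp

lemma walsh_eq_prod (n N : ℕ) (hN : n < 2 ^ N) (x : G) :
    walsh n x = ∏ k ∈ Finset.range N, if n.testBit k then (-1 : ℝ) ^ (x k).val else 1 := by
  unfold walsh
  rcases le_total (n + 1) N with h | h
  · exact (prod_bits n (n+1) N h (lt_trans (Nat.lt_two_pow_self (n := n)) (by simp [pow_lt_pow_right₀])) x).symm
  · exact prod_bits n N (n+1) h hN x

lemma walsh_two_pow_add (m j : ℕ) (hj : j < 2 ^ m) (x : G) :
    walsh (2 ^ m + j) x = (-1 : ℝ) ^ (x m).val * walsh j x := by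
  have hlt : 2 ^ m + j < 2 ^ (m + 1) := by
    have h2 : 2 ^ (m + 1) = 2 ^ m + 2 ^ m := by ring
    omega
  rw [walsh_eq_prod (2 ^ m + j) (m + 1) hlt x,
    walsh_eq_prod j (m + 1) (lt_trans hj (by simp [pow_lt_pow_right₀])) x,
    Finset.prod_range_succ, Finset.prod_range_succ]
  have hbm : (2 ^ m + j).testBit m = true := by
    rw [Nat.testBit_two_pow_add_eq, Nat.testBit_lt_two_pow hj]; rfl
  have hbj : j.testBit m = false := Nat.testBit_lt_two_pow hj
  rw [hbm, hbj, if_pos rfl, if_neg (by simp)]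
  rw [mul_comm ((-1:ℝ) ^ (x m).val) _, mul_one]
  congr 1
  refine Finset.prod_congr rfl fun k hk => ?_
  rw [Nat.testBit_two_pow_add_gt (Finset.mem_range.1 hk)]

lemma Dker_two_pow (m : ℕ) (x : G) :
    Dker (2 ^ m) x = if (∀ j < m, x j = 0) then ((2:ℝ) ^ m) else 0 := by
  induction m with
  | zero => simp [Dker, walsh]
  | succ m ih =>
    have hsplit : Dker (2 ^ (m+1)) x
        = Dker (2 ^ m) x + ∑ j ∈ Finset.range (2 ^ m), walsh (2 ^ m + j) x := by
      unfold Dker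
      rw [show 2 ^ (m+1) = 2 ^ m + 2 ^ m by ring, Finset.sum_range_add]
    rw [hsplit]
    have hS : ∑ j ∈ Finset.range (2 ^ m), walsh (2 ^ m + j) x
        = (-1:ℝ) ^ (x m).val * Dker (2 ^ m) x := by
      unfold Dker
      rw [Finset.mul_sum]
      exact Finset.sum_congr rfl fun j hj => walsh_two_pow_add m j (Finset.mem_range.1 hj) x
    rw [hS, ih]
    have hv : (x m).val = 0 ∨ (x m).val = 1 := by
      have := (x m).val_lt; omega
    rcases hv with hv | hv
    · have hxm : x m = 0 := (ZMod.val_eq_zero _).1 hv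
      have hiff : (∀ j < m + 1, x j = 0) ↔ (∀ j < m, x j = 0) := by
        constructor
        · intro h j hj; exact h j (by omega)
        · intro h j hj
          rcases Nat.lt_succ_iff_lt_or_eq.1 hj with h' | h'
          · exact h j h'
          · rw [h']; exact hxm
      by_cases hc : ∀ j < m, x j = 0
      · rw [if_pos hc, if_pos (hiff.2 hc), hv]; ring
      · rw [if_neg hc, if_neg (fun h => hc (hiff.1 h))]; ring
    · have hxm : x m ≠ 0 := by
        intro h; rw [h] at hv; simp [ZMod.val_zero] at hv
      have hnc : ¬ (∀ j < m + 1, x j = 0) := fun h => hxm (h m (by omega))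
      rw [if_neg hnc, hv]
      by_cases hc : ∀ j < m, x j = 0
      · rw [if_pos hc]; ring
      · rw [if_neg hc]; ring


lemma measurableSet_cyl (m : ℕ) (y : G) : MeasurableSet (cyl m y) := by
  have h : cyl m y = ⋂ j ∈ Set.Iio m, (fun x : G => x j) ⁻¹' {y j} := by
    ext x; simp [cyl]
  rw [h]
  exact MeasurableSet.biInter (Set.to_countable _)
    (fun j _ => (measurable_pi_apply j) (show MeasurableSet {y j} from trivial))

lemma sqrt_sum_le (s : Finset ℕ) (f : ℕ → ℝ) (hf : ∀ k, 0 ≤ f k) :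
    Real.sqrt (∑ k ∈ s, f k) ≤ ∑ k ∈ s, Real.sqrt (f k) := by
  induction s using Finset.cons_induction with
  | empty => simp
  | cons a s ha ih =>
    rw [Finset.sum_cons, Finset.sum_cons]
    refine le_trans ?_ (add_le_add_right ih _)
    have h2 := Real.sq_sqrt (hf a)
    have h3 : Real.sqrt (∑ k ∈ s, f k) ^ 2 = ∑ k ∈ s, f k :=
      Real.sq_sqrt (Finset.sum_nonneg fun k _ => hf k)
    have h1 : f a + (∑ k ∈ s, f k)
        ≤ (Real.sqrt (f a) + Real.sqrt (∑ k ∈ s, f k))^2 := by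
      nlinarith [Real.sqrt_nonneg (f a), Real.sqrt_nonneg (∑ k ∈ s, f k)]
    calc Real.sqrt (f a + ∑ k ∈ s, f k)
        ≤ Real.sqrt ((Real.sqrt (f a) + Real.sqrt (∑ k ∈ s, f k))^2) := Real.sqrt_le_sqrt h1
      _ = _ := Real.sqrt_sq (by positivity)

/-- uniform bound for `∫_{G∖I_M} |II_l|^{1/2}` with Dirichlet tails. -/
theorem sqrt_integral_bound_D :
    ∃ C : ℝ, 0 < C ∧
      ∀ (μ : Measure G), (∀ (m : ℕ) (y : G), μ (cyl m y) = (2 : ENNReal)⁻¹ ^ m) →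
        ∀ (M l : ℕ), l < M →
          ∫ x in (Iset M)ᶜ,
              Real.sqrt |(2 : ℝ) ^ M *
                ∫ t in Iset M, (2 : ℝ) ^ l * ∑' k : ℕ, Dker (2 ^ (l + k)) (x + t) ∂μ| ∂μ
            ≤ C := by
  refine ⟨4, by norm_num, ?_⟩
  intro μ hμ M l hlM
  have hIm : ∀ m, μ (Iset m) = (2 : ENNReal)⁻¹ ^ m := fun m => hμ m 0
  have hmeas : ∀ m, MeasurableSet (Iset m) := fun m => measurableSet_cyl m 0
  set c : ℕ → ℝ := fun k => 2 ^ l * Real.sqrt 2 ^ k with hc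
  set g : G → ℝ := fun x =>
    ∑ k ∈ Finset.range (M - l), Set.indicator (Iset (l+k)) (fun _ => c k) x with hg
  -- pointwise bound
  have hpt : ∀ x ∈ (Iset M)ᶜ,
      Real.sqrt |(2:ℝ)^M *
        ∫ t in Iset M, (2:ℝ)^l * ∑' k : ℕ, Dker (2^(l+k)) (x+t) ∂μ| ≤ g x := by
    intro x hx
    have hxn : ∃ j, j < M ∧ x j ≠ 0 := by
      by_contra h
      push_neg at h
      exact hx (fun j hj => by simpa using h j hj)
    set S : ℝ := ∑ k ∈ Finset.range (M - l),
      (if (∀ j < l + k, x j = 0) then ((2:ℝ) ^ (l+k)) else 0) with hS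
    have hconst : ∀ t ∈ Iset M,
        (2:ℝ)^l * ∑' k : ℕ, Dker (2^(l+k)) (x+t) = (2:ℝ)^l * S := by
      intro t ht
      have htz : ∀ j < M, t j = 0 := fun j hj => by simpa using ht j hj
      congr 1
      have hzero : ∀ k ∉ Finset.range (M - l), Dker (2^(l+k)) (x+t) = 0 := by
        intro k hk
        simp only [Finset.mem_range, not_lt] at hk
        rw [Dker_two_pow]
        obtain ⟨j0, hj0M, hj0⟩ := hxn
        refine if_neg (fun h => hj0 ?_)
        have := h j0 (by omega)
        rw [Pi.add_apply, htz j0 hj0M, add_zero] at this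
        exact this
      rw [tsum_eq_sum hzero]
      refine Finset.sum_congr rfl fun k hk => ?_
      have hkM : l + k < M := by
        have := Finset.mem_range.1 hk; omega
      rw [Dker_two_pow]
      refine if_congr ⟨fun h j hj => ?_, fun h j hj => ?_⟩ rfl rfl
      · have := h j hj
        rwa [Pi.add_apply, htz j (by omega), add_zero] at this
      · rw [Pi.add_apply, htz j (by omega), add_zero]
        exact h j hj
    have hint : (∫ t in Iset M, (2:ℝ)^l * ∑' k : ℕ, Dker (2^(l+k)) (x+t) ∂μ)
        = ((1:ℝ)/2)^M * ((2:ℝ)^l * S) := by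
      rw [setIntegral_congr_fun (hmeas M) hconst, setIntegral_const, measureReal_def, hIm M]
      simp [smul_eq_mul]
    have hSnn : 0 ≤ S := Finset.sum_nonneg fun k _ => by positivity
    have hA : (2:ℝ)^M *
        (∫ t in Iset M, (2:ℝ)^l * ∑' k : ℕ, Dker (2^(l+k)) (x+t) ∂μ) = (2:ℝ)^l * S := by
      rw [hint, ← mul_assoc, show (2:ℝ)^M * ((1:ℝ)/2)^M = 1 by rw [← mul_pow]; norm_num,
        one_mul]
    rw [hA, abs_of_nonneg (by positivity)]
    have hexp : (2:ℝ)^l * S = ∑ k ∈ Finset.range (M - l),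
        (if (∀ j < l + k, x j = 0) then ((2:ℝ)^l * (2:ℝ) ^ (l+k)) else 0) := by
      rw [hS, Finset.mul_sum]
      exact Finset.sum_congr rfl fun k _ => by rw [mul_ite, mul_zero]
    rw [hexp]
    refine (sqrt_sum_le _ _ (fun k => by positivity)).trans ?_
    rw [hg]
    refine Finset.sum_le_sum fun k hk => ?_
    have hsq : Real.sqrt ((2:ℝ)^l * (2:ℝ) ^ (l+k)) = c k := by
      have h2 : (2:ℝ)^l * (2:ℝ)^(l+k) = ((2:ℝ)^l * Real.sqrt 2 ^ k)^2 := by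
        have hs2 : (Real.sqrt 2) ^ 2 = 2 := Real.sq_sqrt (by norm_num)
        calc (2:ℝ)^l * (2:ℝ)^(l+k) = ((2:ℝ)^l)^2 * (2:ℝ)^k := by
              rw [pow_add]; ring
          _ = ((2:ℝ)^l)^2 * ((Real.sqrt 2) ^ 2)^k := by rw [hs2]
          _ = ((2:ℝ)^l * Real.sqrt 2 ^ k)^2 := by ring
      rw [h2, Real.sqrt_sq (by positivity)]
    by_cases hcond : ∀ j < l + k, x j = 0
    · rw [if_pos hcond, hsq]
      have hmem : x ∈ Iset (l+k) := fun j hj => by simpa using hcond j hj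
      rw [Set.indicator_of_mem hmem]
    · rw [if_neg hcond, Real.sqrt_zero]
      exact Set.indicator_nonneg (fun y _ => by positivity) x
  -- integrability of g
  have hint_k : ∀ k, Integrable (Set.indicator (Iset (l+k)) (fun _ => c k))
      (μ.restrict (Iset M)ᶜ) := by
    intro k
    refine (integrable_indicator_iff (hmeas (l+k))).2 ?_
    refine integrableOn_const (ne_of_lt ?_)
    calc (μ.restrict (Iset M)ᶜ) (Iset (l+k)) ≤ μ (Iset (l+k)) :=
          Measure.restrict_apply_le _ _
      _ = (2 : ENNReal)⁻¹ ^ (l+k) := hIm _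
      _ < ⊤ := by
          refine ENNReal.pow_lt_top ?_
          simp
  have hgint : Integrable g (μ.restrict (Iset M)ᶜ) :=
    integrable_finset_sum _ (fun k _ => hint_k k)
  refine (integral_mono_of_nonneg
    (Filter.Eventually.of_forall fun x => Real.sqrt_nonneg _) hgint
    (ae_restrict_of_forall_mem (hmeas M).compl hpt)).trans ?_
  -- compute/bound ∫ g
  rw [hg, integral_finset_sum _ (fun k _ => hint_k k)]
  have hterm : ∀ k ∈ Finset.range (M - l),
      (∫ x, Set.indicator (Iset (l+k)) (fun _ => c k) x ∂(μ.restrict (Iset M)ᶜ))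
        ≤ (3/4 : ℝ) ^ k := by
    intro k _
    rw [integral_indicator_const _ (hmeas (l+k)), smul_eq_mul]
    have hle : ((μ.restrict (Iset M)ᶜ) (Iset (l+k))).toReal ≤ ((1:ℝ)/2) ^ (l+k) := by
      have h1 : (μ.restrict (Iset M)ᶜ) (Iset (l+k)) ≤ μ (Iset (l+k)) :=
        Measure.restrict_apply_le _ _
      have h2 : μ (Iset (l+k)) = (2 : ENNReal)⁻¹ ^ (l+k) := hIm _
      calc ((μ.restrict (Iset M)ᶜ) (Iset (l+k))).toReal
          ≤ ((2 : ENNReal)⁻¹ ^ (l+k)).toReal := by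
            refine ENNReal.toReal_mono ?_ (h2 ▸ h1)
            refine (ENNReal.pow_lt_top ?_).ne
            simp
        _ = ((1:ℝ)/2) ^ (l+k) := by
            rw [ENNReal.toReal_pow]
            norm_num
    have hck : 0 ≤ c k := by rw [hc]; positivity
    calc ((μ.restrict (Iset M)ᶜ) (Iset (l+k))).toReal * c k
        ≤ ((1:ℝ)/2) ^ (l+k) * c k := by
          exact mul_le_mul_of_nonneg_right hle hck
      _ = (Real.sqrt 2 / 2) ^ k := by
          rw [hc, pow_add, div_pow]
          have : ((1:ℝ)/2)^l * (2:ℝ)^l = 1 := by rw [← mul_pow]; norm_num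
          field_simp
          ring
      _ ≤ (3/4 : ℝ) ^ k := by
          refine pow_le_pow_left₀ (by positivity) ?_ k
          rw [div_le_div_iff₀ (by norm_num) (by norm_num)]
          nlinarith [Real.sq_sqrt (show (0:ℝ) ≤ 2 by norm_num),
            Real.sqrt_nonneg 2]
  refine (Finset.sum_le_sum hterm).trans ?_
  calc ∑ k ∈ Finset.range (M - l), (3/4 : ℝ) ^ k
      ≤ ∑' k : ℕ, (3/4 : ℝ) ^ k :=
        Summable.sum_le_tsum _ (fun k _ => by positivity)
          (summable_geometric_of_lt_one (by norm_num) (by norm_num))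
    _ = 4 := by
        rw [tsum_geometric_of_lt_one (by norm_num) (by norm_num)]
        norm_num
end
end
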